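/- There exists exactly one noncommutative power series S ∈ ℝ⟨⟨A⟩⟩ with zero constant term satisfying the algebraic equation S = b − a·exp⧢(2S)·c, where the products with the letters a and c are concatenation products. -/

import Mathlib

/-! The right-hand side `Φ S = b − a·exp⧢(2S)·c` is causal in word length: its coefficient on a
word `w` depends only on the coefficients of `S` on words strictly shorter than `w`, because the
leading letter `a` consumes one letter of `w` while the concatenation and shuffle products only
ever evaluate their factors on subwords. A map with this property has exactly one fixed point,
obtained by well-founded recursion on the length, and `Φ S` has zero constant term for every `S`. -/

/-- The three-letter alphabet `A = {a, b, c}`. -/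
inductive Letter : Type
  | a | b | c
deriving DecidableEq

/-- Words on the alphabet. -/
abbrev Word := List Letter

/-- Noncommutative power series over `ℝ` on the alphabet: a real coefficient
for every word. -/
abbrev Series := Word → ℝ

/-- The series associated to a single word (coefficient `1` on that word, `0` elsewhere). -/
def ofWord (v : Word) : Series := fun w => if w = v then 1 else 0

/-- Concatenation product of series: `⟨PQ, w⟩ = Σ_{uv = w} ⟨P,u⟩⟨Q,v⟩`. -/
noncomputable def cmul (P Q : Series) : Series :=
  fun w => ∑ i ∈ Finset.range (w.length + 1), P (w.take i) * Q (w.drop i)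

/-- The subword of `w` selected by a boolean mask. -/
def select (w : Word) (m : List Bool) : Word :=
  ((w.zip m).filter (fun p => p.2)).map Prod.fst

/-- The (bilinear) shuffle product of two series: the coefficient on `w` is the sum,
over all splittings of the positions of `w` into two complementary subsets, of the
product of the coefficients of the two selected subwords.  This is the bilinear
product determined on words by `ε⧢w = w⧢ε = w` and
`(w₁a₁)⧢(w₂a₂) = (w₁⧢(w₂a₂))a₁ + ((w₁a₁)⧢w₂)a₂`. -/
noncomputable def shuffle (P Q : Series) : Series := fun w =>
  ∑ m : Fin w.length → Bool,
    P (select w (List.ofFn m)) * Q (select w (List.ofFn (fun i => ! m i)))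

/-- Shuffle powers `P^{⧢k}`. -/
noncomputable def shufPow (P : Series) : ℕ → Series
  | 0 => ofWord []
  | k + 1 => shuffle (shufPow P k) P

/-- The shuffle exponential `exp⧢(P) = ε + Σ_{k≥1} P^{⧢k}/k!` (for `P` with zero
constant term only finitely many terms contribute to each coefficient). -/
noncomputable def shufExp (P : Series) : Series :=
  fun w => ∑' k : ℕ, ((k.factorial : ℝ))⁻¹ * shufPow P k w

section Causal

variable {X β : Type*}

def DeterminedBySmaller (ℓ : X → ℕ) (Φ : (X → β) → X → β) : Prop :=
  ∀ ⦃S T : X → β⦄ (x : X), (∀ y, ℓ y < ℓ x → S y = T y) → Φ S x = Φ T x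

theorem DeterminedBySmaller.existsUnique_fixedPoint [Nonempty β] {ℓ : X → ℕ}
    {Φ : (X → β) → X → β} (hΦ : DeterminedBySmaller ℓ Φ) : ∃! S, Φ S = S := by
  obtain ⟨S, hS_eq⟩ : ∃ S : X → β, ∀ x,
      S x = Φ (fun y => if ℓ y < ℓ x then S y else Classical.arbitrary β) x :=
    ⟨_, (measure ℓ).wf.fix_eq fun x rec =>
      Φ (fun y => if h : ℓ y < ℓ x then rec y h else Classical.arbitrary β) x⟩
  have hS : Φ S = S := funext fun x =>
    ((hS_eq x).trans (hΦ x fun y hy => if_pos hy)).symm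
  refine ⟨S, hS, fun T hT => funext fun x => ?_⟩
  induction x using (measure ℓ).wf.induction with
  | h x ih => rw [← hT, ← hS]; exact hΦ x ih

end Causal

section Locality

theorem select_length_le (w : Word) (m : List Bool) : (select w m).length ≤ w.length :=
  calc (select w m).length ≤ (w.zip m).length :=
        (List.length_map _).trans_le (List.length_filter_le _ _)
    _ ≤ w.length := by rw [List.length_zip]; exact min_le_left _ _

variable {P P' Q Q' : Series} {n : ℕ}

theorem shuffle_eqOn (hP : Set.EqOn P P' {v | v.length ≤ n})
    (hQ : Set.EqOn Q Q' {v | v.length ≤ n}) :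
    Set.EqOn (shuffle P Q) (shuffle P' Q') {v | v.length ≤ n} := fun w hw =>
  Finset.sum_congr rfl fun _ _ => by
    rw [hP ((select_length_le _ _).trans hw), hQ ((select_length_le _ _).trans hw)]

theorem shufPow_eqOn (h : Set.EqOn P P' {v | v.length ≤ n}) (k : ℕ) :
    Set.EqOn (shufPow P k) (shufPow P' k) {v | v.length ≤ n} := by
  induction k with
  | zero => exact Set.eqOn_refl _ _
  | succ k ih => exact shuffle_eqOn ih h

theorem shufExp_eqOn (h : Set.EqOn P P' {v | v.length ≤ n}) :
    Set.EqOn (shufExp P) (shufExp P') {v | v.length ≤ n} := fun _ hw =>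
  tsum_congr fun k => by rw [shufPow_eqOn h k hw]

theorem cmul_eqOn (hP : Set.EqOn P P' {v | v.length ≤ n})
    (hQ : Set.EqOn Q Q' {v | v.length ≤ n}) :
    Set.EqOn (cmul P Q) (cmul P' Q') {v | v.length ≤ n} := fun w hw =>
  Finset.sum_congr rfl fun i _ => by
    rw [hP ((List.length_take_le' i w).trans hw),
      hQ ((List.length_drop ▸ Nat.sub_le _ _).trans hw)]

end Locality

theorem cmul_ofWord_singleton_nil (x : Letter) (P : Series) : cmul (ofWord [x]) P [] = 0 := by
  simp [cmul, ofWord]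

theorem cmul_ofWord_singleton_cons (x y : Letter) (P : Series) (t : Word) :
    cmul (ofWord [x]) P (y :: t) = if y = x then P t else 0 := by
  rw [cmul, Finset.sum_eq_single 1]
  · by_cases h : y = x <;> simp [ofWord, h]
  · intro i hi hi1
    have hlen : (List.take i (y :: t)).length ≠ [x].length := by
      simp only [Finset.mem_range, List.length_cons] at hi
      simp only [List.length_take, List.length_cons, List.length_nil]
      omega
    rw [ofWord, if_neg (mt (congrArg List.length) hlen), zero_mul]
  · simp

noncomputable def rhs (S : Series) : Series :=
  ofWord [Letter.b] -
    cmul (ofWord [Letter.a]) (cmul (shufExp ((2 : ℝ) • S)) (ofWord [Letter.c]))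

theorem rhs_nil (S : Series) : rhs S [] = 0 := by
  simp [rhs, ofWord, cmul_ofWord_singleton_nil]

theorem rhs_determinedBySmaller : DeterminedBySmaller List.length rhs := by
  intro S T w hST
  simp only [rhs, Pi.sub_apply]
  congr 1
  cases w with
  | nil => simp only [cmul_ofWord_singleton_nil]
  | cons y t =>
    simp only [cmul_ofWord_singleton_cons]
    split_ifs
    · refine cmul_eqOn (shufExp_eqOn fun v hv => ?_) (Set.eqOn_refl _ _) (le_refl t.length)
      simp only [Pi.smul_apply, hST v (Nat.lt_succ_of_le hv)]
    · rfl

/-- There exists exactly one series `S` with zero constant term such that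
`S = b − a·exp⧢(2S)·c`. -/
theorem existsUnique_series_eq_b_sub_a_shufExp_c :
    ∃! S : Series, S [] = 0 ∧
      S = ofWord [Letter.b] -
          cmul (ofWord [Letter.a]) (cmul (shufExp ((2 : ℝ) • S)) (ofWord [Letter.c])) := by
  obtain ⟨S, hS, hunique⟩ := rhs_determinedBySmaller.existsUnique_fixedPoint
  refine ⟨S, ⟨hS ▸ rhs_nil S, hS.symm⟩, fun T hT => hunique T hT.2.symm⟩
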